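/- arXiv:2004.08872 — 2 statements merged into one kernel-verified Lean document; each statement's English description precedes it below -/
import Mathlib

section
/- Let A ∈ ℝ^{n1×n2×n3} be nonzero with an ordered t-SVD A = U * S * V^T, and let M₁ = U(:,1,:) * (S(1,1,:)/‖S(1,1,:)‖_F) * V(:,1,:)^T be the normalized leading rank-one tensor of A. Then ⟨M₁, A⟩ = ‖S(1,1,:)‖_F. -/
open scoped BigOperators Matrix Kronecker ComplexConjugate
open Complex

/-- A third-order tensor of size `n1 × n2 × n3` with entries in `R`. -/
abbrev T3 (n1 n2 n3 : ℕ) (R : Type*) : Type _ := Fin n1 → Fin n2 → Fin n3 → R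

namespace T3

variable {n1 n2 n3 l : ℕ}

/-- The Frobenius inner product `⟨A,B⟩ = Σ_{i,j,k} A_{ijk} B_{ijk}`. -/
def tInner (A B : T3 n1 n2 n3 ℝ) : ℝ := ∑ i, ∑ j, ∑ k, A i j k * B i j k

/-- The Frobenius norm `‖A‖_F = √⟨A,A⟩`. -/
noncomputable def tNorm (A : T3 n1 n2 n3 ℝ) : ℝ := Real.sqrt (tInner A A)

/-- The `n × n` DFT matrix, `(F_n)_{ab} = ω^{ab}` (0-based), `ω = exp(-2πi/n)`. -/
noncomputable def dftMatrix (n : ℕ) : Matrix (Fin n) (Fin n) ℂ :=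
  fun a b => Complex.exp (-(2 * (Real.pi : ℂ) * Complex.I) / (n : ℂ)) ^ ((a : ℕ) * (b : ℕ))

/-- The `k`-th frontal slice `Â^{(k)}` of the DFT of `A` along the third dimension:
`Â(i,j,:) = F_{n3} · A(i,j,:)`. -/
noncomputable def hatSlice (A : T3 n1 n2 n3 ℝ) (k : Fin n3) : Matrix (Fin n1) (Fin n2) ℂ :=
  fun i j => ∑ m : Fin n3, dftMatrix n3 k m * (A i j m : ℂ)

/-- The block circulant matrix of `A`: the `(p,q)` block (0-based) is the frontal
slice `A^{(p-q mod n3)}`. -/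
def bcirc (A : T3 n1 n2 n3 ℝ) : Matrix (Fin n3 × Fin n1) (Fin n3 × Fin n2) ℝ :=
  fun p q => A p.2 q.2 (p.1 - q.1)

/-- The block diagonal matrix with diagonal blocks `Â^{(1)}, …, Â^{(n3)}`. -/
noncomputable def bdiag (A : T3 n1 n2 n3 ℝ) : Matrix (Fin n3 × Fin n1) (Fin n3 × Fin n2) ℂ :=
  fun p q => if p.1 = q.1 then hatSlice A p.1 p.2 q.2 else 0

/-- t-product: `(A*B)^{(k)} = Σ_q A^{(k-q mod n3)} B^{(q)}` (circular convolution of slices). -/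
def tprod (A : T3 n1 n2 n3 ℝ) (B : T3 n2 l n3 ℝ) : T3 n1 l n3 ℝ :=
  fun i j k => ∑ q : Fin n3, ∑ p : Fin n2, A i p (k - q) * B p j q

/-- Tensor transpose: `(Aᵀ)^{(k)} = (A^{(-k mod n3)})ᵀ`. -/
def tT (A : T3 n1 n2 n3 ℝ) : T3 n2 n1 n3 ℝ := fun j i k => A i j (-k)

/-- The identity tensor: first frontal slice the identity matrix, other slices zero. -/
def tI (q m : ℕ) : T3 q q m ℝ := fun i j k => if i = j ∧ (k : ℕ) = 0 then 1 else 0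

/-- An orthogonal tensor: `Qᵀ * Q = Q * Qᵀ = I`. -/
def TOrth {n m : ℕ} (Q : T3 n n m ℝ) : Prop :=
  tprod (tT Q) Q = tI n m ∧ tprod Q (tT Q) = tI n m

/-- A partially orthogonal tensor: `Qᵀ * Q = I`. -/
def PartOrth {n q m : ℕ} (Q : T3 n q m ℝ) : Prop := tprod (tT Q) Q = tI q m

/-- f-diagonal tensor: every frontal slice is a diagonal matrix. -/
def FDiag (S : T3 n1 n2 n3 ℝ) : Prop :=
  ∀ (i : Fin n1) (j : Fin n2) (k : Fin n3), (i : ℕ) ≠ (j : ℕ) → S i j k = 0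

/-- Every Fourier-domain frontal slice of `S` has real, nonnegative, nonincreasing
diagonal entries. -/
def OrderedDiag (S : T3 n1 n2 n3 ℝ) : Prop :=
  ∀ k : Fin n3,
    (∀ (i : Fin n1) (j : Fin n2), (i : ℕ) = (j : ℕ) →
      (hatSlice S k i j).im = 0 ∧ 0 ≤ (hatSlice S k i j).re) ∧
    (∀ (i i' : Fin n1) (j j' : Fin n2), (i : ℕ) = (j : ℕ) → (i' : ℕ) = (j' : ℕ) →
      (i : ℕ) ≤ (i' : ℕ) → (hatSlice S k i' j').re ≤ (hatSlice S k i j).re)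

/-- A t-SVD of `A`: `A = U * S * Vᵀ` with `U, V` orthogonal and `S` f-diagonal. -/
def IsTSVD (A : T3 n1 n2 n3 ℝ) (U : T3 n1 n1 n3 ℝ) (S : T3 n1 n2 n3 ℝ)
    (V : T3 n2 n2 n3 ℝ) : Prop :=
  TOrth U ∧ TOrth V ∧ FDiag S ∧ A = tprod (tprod U S) (tT V)

/-- An ordered t-SVD. -/
def IsOrderedTSVD (A : T3 n1 n2 n3 ℝ) (U : T3 n1 n1 n3 ℝ) (S : T3 n1 n2 n3 ℝ)
    (V : T3 n2 n2 n3 ℝ) : Prop :=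
  IsTSVD A U S V ∧ OrderedDiag S

/-- Lateral slice `U(:,i,:)` as an `n1 × 1 × n3` tensor. -/
def lat (U : T3 n1 n2 n3 ℝ) (i : Fin n2) : T3 n1 1 n3 ℝ := fun a _ k => U a i k

/-- Tube `S(i,j,:)` as a `1 × 1 × n3` tensor. -/
def tube (S : T3 n1 n2 n3 ℝ) (i : Fin n1) (j : Fin n2) : T3 1 1 n3 ℝ := fun _ _ k => S i j k

/-- The rank-one term `U(:,i,:) * S(i,j,:) * V(:,j,:)ᵀ`. -/
def rankOne (U : T3 n1 n1 n3 ℝ) (S : T3 n1 n2 n3 ℝ) (V : T3 n2 n2 n3 ℝ)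
    (i : Fin n1) (j : Fin n2) : T3 n1 n2 n3 ℝ :=
  tprod (tprod (lat U i) (tube S i j)) (tT (lat V j))

/-- The normalized leading rank-one tensor
`M₁ = U(:,1,:) * (S(1,1,:)/‖S(1,1,:)‖_F) * V(:,1,:)ᵀ`. -/
noncomputable def leadM (hn1 : 0 < n1) (hn2 : 0 < n2) (U : T3 n1 n1 n3 ℝ)
    (S : T3 n1 n2 n3 ℝ) (V : T3 n2 n2 n3 ℝ) : T3 n1 n2 n3 ℝ :=
  tprod (tprod (lat U ⟨0, hn1⟩)
      (fun _ _ k => S ⟨0, hn1⟩ ⟨0, hn2⟩ k / tNorm (tube S ⟨0, hn1⟩ ⟨0, hn2⟩)))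
    (tT (lat V ⟨0, hn2⟩))

/-- `‖Y‖_{1,F}`: the maximal Euclidean norm of a column fiber of a frontal slice of `Ŷ`. -/
noncomputable def norm1F (Y : T3 n1 n2 n3 ℝ) : ℝ :=
  ⨆ p : Fin n2 × Fin n3, Real.sqrt (∑ i, ‖hatSlice Y p.2 i p.1‖ ^ 2)

/-- The tubal rank: the maximal rank of a frontal slice of the third-mode DFT. -/
noncomputable def tubalRank (X : T3 n1 n2 n3 ℝ) : ℕ :=
  Finset.univ.sup fun k : Fin n3 => (hatSlice X k).rank

end T3

open T3

/-! The block circulant embedding `bcirc` turns the t-product into matrix multiplication and the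
tensor transpose into the matrix transpose, is injective, and satisfies
`tr ((bcirc X)ᵀ * bcirc Y) = n3 ⟨X, Y⟩`. Hence the t-product is associative with unit `I`, and
multiplying by `A` on either side is adjoint to multiplying by `Aᵀ`. This moves the outer factors
of `M₁ = U(:,1,:) * T * V(:,1,:)ᵀ` onto `A`: `⟨M₁, A⟩ = ⟨T, (Uᵀ * A * V)(1,1,:)⟩`, and
`Uᵀ * (U * S * Vᵀ) * V = S` by orthogonality. With `T = S(1,1,:) / ‖S(1,1,:)‖_F` this is
`‖S(1,1,:)‖_F² / ‖S(1,1,:)‖_F`. -/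

namespace T3

variable {n1 n2 n3 l r : ℕ}

lemma tprod_tT_lat_tprod_lat (U : T3 n1 r n3 ℝ) (X : T3 n1 n2 n3 ℝ) (V : T3 n2 l n3 ℝ)
    (i : Fin r) (j : Fin l) :
    tprod (tprod (tT (lat U i)) X) (lat V j) = tube (tprod (tprod (tT U) X) V) i j :=
  rfl

lemma tInner_div_tNorm_self (X : T3 n1 n2 n3 ℝ) :
    tInner (fun i j k => X i j k / tNorm X) X = tNorm X := by
  simp only [tInner, div_mul_eq_mul_div, ← Finset.sum_div]
  exact Real.div_sqrt

section Circulant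

variable [NeZero n3]

lemma bcirc_injective : Function.Injective (bcirc : T3 n1 n2 n3 ℝ → _) := by
  intro A B h
  funext i j k
  simpa [bcirc] using congrFun (congrFun h (k, i)) (0, j)

lemma bcirc_tprod (A : T3 n1 n2 n3 ℝ) (B : T3 n2 l n3 ℝ) :
    bcirc (tprod A B) = bcirc A * bcirc B := by
  ext ⟨k, i⟩ ⟨k', j⟩
  simp only [bcirc, tprod, Matrix.mul_apply, Fintype.sum_prod_type]
  refine Fintype.sum_equiv (Equiv.addRight k') _ _
    (fun q => Finset.sum_congr rfl fun p _ => ?_)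
  simp [sub_sub, add_comm]

lemma bcirc_tT (A : T3 n1 n2 n3 ℝ) : bcirc (tT A) = (bcirc A)ᵀ := by
  ext ⟨k, j⟩ ⟨k', i⟩
  simp [bcirc, tT, neg_sub]

lemma bcirc_tI : bcirc (tI n1 n3) = 1 := by
  ext ⟨k, i⟩ ⟨k', j⟩
  simp only [bcirc, tI, Matrix.one_apply, Prod.ext_iff, Fin.val_eq_zero_iff, sub_eq_zero, and_comm]

lemma tprod_assoc (A : T3 n1 n2 n3 ℝ) (B : T3 n2 l n3 ℝ) (C : T3 l r n3 ℝ) :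
    tprod (tprod A B) C = tprod A (tprod B C) :=
  bcirc_injective <| by simp only [bcirc_tprod, Matrix.mul_assoc]

lemma tI_tprod (A : T3 n1 n2 n3 ℝ) : tprod (tI n1 n3) A = A :=
  bcirc_injective <| by rw [bcirc_tprod, bcirc_tI, Matrix.one_mul]

lemma tprod_tI (A : T3 n1 n2 n3 ℝ) : tprod A (tI n2 n3) = A :=
  bcirc_injective <| by rw [bcirc_tprod, bcirc_tI, Matrix.mul_one]

lemma tT_tT (A : T3 n1 n2 n3 ℝ) : tT (tT A) = A :=
  bcirc_injective <| by rw [bcirc_tT, bcirc_tT, Matrix.transpose_transpose]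

lemma trace_transpose_bcirc_mul_bcirc (X Y : T3 n1 n2 n3 ℝ) :
    ((bcirc X)ᵀ * bcirc Y).trace = n3 * tInner X Y := by
  have shift (k' : Fin n3) (j : Fin n2) :
      ∑ k : Fin n3, ∑ i, X i j (k - k') * Y i j (k - k') = ∑ k, ∑ i, X i j k * Y i j k :=
    Fintype.sum_equiv (Equiv.subRight k') _ _ fun _ => rfl
  simp only [Matrix.trace, Matrix.diag_apply, Matrix.mul_apply, Matrix.transpose_apply, bcirc,
    Fintype.sum_prod_type, shift, Finset.sum_const, Finset.card_univ, Fintype.card_fin,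
    nsmul_eq_mul, tInner]
  congr 1
  rw [eq_comm, Finset.sum_comm]
  exact Finset.sum_congr rfl fun _ _ => Finset.sum_comm

lemma tInner_tprod_left (A : T3 n1 n2 n3 ℝ) (B : T3 n2 l n3 ℝ) (C : T3 n1 l n3 ℝ) :
    tInner (tprod A B) C = tInner B (tprod (tT A) C) := by
  refine mul_left_cancel₀ (Nat.cast_ne_zero.mpr (NeZero.ne n3) : (n3 : ℝ) ≠ 0) ?_
  rw [← trace_transpose_bcirc_mul_bcirc, ← trace_transpose_bcirc_mul_bcirc, bcirc_tprod,
    bcirc_tprod, bcirc_tT, Matrix.transpose_mul, Matrix.mul_assoc]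

lemma tInner_tprod_right (A : T3 n1 n2 n3 ℝ) (B : T3 n2 l n3 ℝ) (C : T3 n1 l n3 ℝ) :
    tInner (tprod A B) C = tInner A (tprod C (tT B)) := by
  refine mul_left_cancel₀ (Nat.cast_ne_zero.mpr (NeZero.ne n3) : (n3 : ℝ) ≠ 0) ?_
  rw [← trace_transpose_bcirc_mul_bcirc, ← trace_transpose_bcirc_mul_bcirc, bcirc_tprod,
    bcirc_tprod, bcirc_tT, Matrix.transpose_mul, Matrix.mul_assoc, Matrix.trace_mul_comm,
    Matrix.mul_assoc, Matrix.trace_mul_comm]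

lemma tInner_lat_tprod_tT_lat (U : T3 n1 r n3 ℝ) (T : T3 1 1 n3 ℝ) (V : T3 n2 l n3 ℝ)
    (i : Fin r) (j : Fin l) (A : T3 n1 n2 n3 ℝ) :
    tInner (tprod (tprod (lat U i) T) (tT (lat V j))) A
      = tInner T (tube (tprod (tprod (tT U) A) V) i j) := by
  rw [tInner_tprod_right, tT_tT, tInner_tprod_left, ← tprod_assoc, tprod_tT_lat_tprod_lat]

lemma tprod_tT_tprod_tprod_tT_of_partOrth {U : T3 n1 r n3 ℝ} {V : T3 n2 l n3 ℝ}
    (hU : PartOrth U) (hV : PartOrth V) (S : T3 r l n3 ℝ) :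
    tprod (tprod (tT U) (tprod (tprod U S) (tT V))) V = S := by
  rw [← tprod_assoc, ← tprod_assoc, hU, tI_tprod, tprod_assoc, hV, tprod_tI]

end Circulant

end T3

theorem stmt_7_general (n1 n2 n3 : ℕ) (hn1 : 0 < n1) (hn2 : 0 < n2)
    (A : T3 n1 n2 n3 ℝ) (U : T3 n1 n1 n3 ℝ) (S : T3 n1 n2 n3 ℝ)
    (V : T3 n2 n2 n3 ℝ) (h : IsOrderedTSVD A U S V) :
    tInner (leadM hn1 hn2 U S V) A = tNorm (tube S ⟨0, hn1⟩ ⟨0, hn2⟩) := by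
  rcases Nat.eq_zero_or_pos n3 with rfl | hn3
  · simp [tInner, tNorm]
  have : NeZero n3 := ⟨hn3.ne'⟩
  obtain ⟨⟨hU, hV, -, rfl⟩, -⟩ := h
  rw [leadM, tInner_lat_tprod_tT_lat, tprod_tT_tprod_tprod_tT_of_partOrth hU.1 hV.1]
  exact tInner_div_tNorm_self _

/-- for nonzero `A` with ordered t-SVD `A = U * S * Vᵀ` and normalized
leading rank-one tensor `M₁`, one has `⟨M₁, A⟩ = ‖S(1,1,:)‖_F`. -/
theorem stmt_7 (n1 n2 n3 : ℕ) (hn1 : 0 < n1) (hn2 : 0 < n2)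
    (A : T3 n1 n2 n3 ℝ) (hA : A ≠ 0) (U : T3 n1 n1 n3 ℝ) (S : T3 n1 n2 n3 ℝ)
    (V : T3 n2 n2 n3 ℝ) (h : IsOrderedTSVD A U S V) :
    tInner (leadM hn1 hn2 U S V) A = tNorm (tube S ⟨0, hn1⟩ ⟨0, hn2⟩) :=
  stmt_7_general n1 n2 n3 hn1 hn2 A U S V h
end

section
/- Let A ∈ ℝ^{n1×n2×n3} have an ordered t-SVD A = U * S * V^T. Then the leading singular tube dominates in the sense that ‖S(1,1,:)‖_F² ≥ ‖A‖_F² / min(n1,n2). -/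
open scoped BigOperators Matrix Kronecker ComplexConjugate
open Complex

open T3

/-!
Under the DFT along the third mode the t-product becomes slicewise matrix multiplication and
the transpose becomes the conjugate transpose, so `Â⁽ᵏ⁾ = Û⁽ᵏ⁾ Ŝ⁽ᵏ⁾ (V̂⁽ᵏ⁾)ᴴ` with unitary
`Û⁽ᵏ⁾`, `V̂⁽ᵏ⁾`, and hence `‖Â⁽ᵏ⁾‖_F = ‖Ŝ⁽ᵏ⁾‖_F`. Each `Ŝ⁽ᵏ⁾` is diagonal with at most
`min(n1, n2)` nonzero entries, none larger in modulus than the leading one, so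
`‖Ŝ⁽ᵏ⁾‖_F² ≤ min(n1, n2) |Ŝ⁽ᵏ⁾₁₁|²`. Summing over `k` and applying Parseval,
`∑ₖ ‖X̂⁽ᵏ⁾‖_F² = n3 ‖X‖_F²`, to `A` and to the tube `S(1,1,:)` gives the bound.
-/

namespace T3

section DFT

variable {n : ℕ}

noncomputable def dftRoot (n : ℕ) : ℂ :=
  Complex.exp (-(2 * (Real.pi : ℂ) * Complex.I) / (n : ℂ))

lemma dftMatrix_apply (a b : Fin n) : dftMatrix n a b = dftRoot n ^ ((a : ℕ) * (b : ℕ)) := rfl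

lemma isPrimitiveRoot_dftRoot (hn : n ≠ 0) : IsPrimitiveRoot (dftRoot n) n := by
  have h : dftRoot n = (Complex.exp (2 * Real.pi * Complex.I / n))⁻¹ := by
    rw [dftRoot, ← Complex.exp_neg]
    ring_nf
  rw [h]
  exact (Complex.isPrimitiveRoot_exp n hn).inv

lemma dftRoot_pow_eq_pow_of_modEq {a b : ℕ} (h : a ≡ b [MOD n]) :
    dftRoot n ^ a = dftRoot n ^ b := by
  rcases eq_or_ne n 0 with rfl | hn
  · rw [Nat.modEq_zero_iff.mp h]
  have hω : dftRoot n ^ n = 1 := (isPrimitiveRoot_dftRoot hn).pow_eq_one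
  rw [← Nat.mod_add_div a n, ← Nat.mod_add_div b n, h, pow_add, pow_add, pow_mul, pow_mul, hω,
    one_pow, one_pow]

lemma dftMatrix_add_right (k r q : Fin n) :
    dftMatrix n k (r + q) = dftMatrix n k r * dftMatrix n k q := by
  simp only [dftMatrix_apply, ← pow_add, ← Nat.mul_add]
  exact dftRoot_pow_eq_pow_of_modEq ((Nat.mod_modEq _ _).mul_left _)

lemma dftMatrix_zero_right [NeZero n] (k : Fin n) : dftMatrix n k 0 = 1 := by
  simp [dftMatrix_apply]

lemma dftMatrix_neg_right (k m : Fin n) : dftMatrix n k (-m) = star (dftMatrix n k m) := by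
  have := NeZero.of_pos m.pos
  have hnorm : ‖dftMatrix n k m‖ = 1 := by
    rw [dftMatrix_apply, norm_pow, (isPrimitiveRoot_dftRoot m.pos.ne').norm'_eq_one m.pos.ne',
      one_pow]
  rw [← starRingEnd_apply, ← Complex.inv_eq_conj hnorm]
  refine eq_inv_of_mul_eq_one_left ?_
  rw [← dftMatrix_add_right, neg_add_cancel, dftMatrix_zero_right]

lemma sum_dftMatrix_mul_sub (k q : Fin n) (f : Fin n → ℂ) :
    ∑ m, dftMatrix n k m * f (m - q) = dftMatrix n k q * ∑ r, dftMatrix n k r * f r := by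
  have := NeZero.of_pos q.pos
  rw [Finset.mul_sum]
  refine Fintype.sum_equiv (Equiv.subRight q) _ _ fun m => ?_
  rw [Equiv.subRight_apply, ← mul_assoc, ← dftMatrix_add_right, add_sub_cancel]

lemma sum_dftMatrix_apply_left [NeZero n] (c : Fin n) :
    ∑ k, dftMatrix n k c = if c = 0 then (n : ℂ) else 0 := by
  have hω := isPrimitiveRoot_dftRoot c.pos.ne'
  simp only [dftMatrix_apply, mul_comm _ (c : ℕ), pow_mul]
  rw [Fin.sum_univ_eq_sum_range (fun k => (dftRoot n ^ (c : ℕ)) ^ k)]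
  split_ifs with hc
  · simp [hc]
  · have hc1 : dftRoot n ^ (c : ℕ) ≠ 1 := fun h =>
      hc <| Fin.ext <| by
        rw [Fin.val_zero]
        exact Nat.eq_zero_of_dvd_of_lt ((hω.pow_eq_one_iff_dvd _).mp h) c.2
    rw [geom_sum_eq hc1, ← pow_mul, mul_comm, pow_mul, hω.pow_eq_one, one_pow, sub_self,
      zero_div]

lemma dftMatrix_conjTranspose_mul_self : (dftMatrix n)ᴴ * dftMatrix n = (n : ℂ) • 1 := by
  ext a b
  have := NeZero.of_pos a.pos
  simp only [Matrix.mul_apply, Matrix.conjTranspose_apply, ← dftMatrix_neg_right,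
    ← dftMatrix_add_right, sum_dftMatrix_apply_left, neg_add_eq_zero, Matrix.smul_apply,
    Matrix.one_apply, smul_eq_mul, mul_ite, mul_one, mul_zero]

lemma sum_normSq_dftMatrix_mulVec (x : Fin n → ℂ) :
    ∑ k, Complex.normSq ((dftMatrix n *ᵥ x) k) = n * ∑ m, Complex.normSq (x m) := by
  have hsum (v : Fin n → ℂ) : star v ⬝ᵥ v = ∑ i, (Complex.normSq (v i) : ℂ) := by
    simp [dotProduct, Complex.normSq_eq_conj_mul_self]
  apply Complex.ofReal_injective
  push_cast
  rw [← hsum, ← hsum, Matrix.star_mulVec, ← Matrix.dotProduct_mulVec, Matrix.mulVec_mulVec,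
    dftMatrix_conjTranspose_mul_self, Matrix.smul_mulVec, Matrix.one_mulVec, dotProduct_smul,
    smul_eq_mul]

end DFT

section Frobenius

variable {m n m' n' : Type*} [Fintype m] [Fintype n] [Fintype m'] [Fintype n']

def frobSq (M : Matrix m n ℂ) : ℝ := ∑ i, ∑ j, Complex.normSq (M i j)

lemma ofReal_frobSq (M : Matrix m n ℂ) : (frobSq M : ℂ) = (Mᴴ * M).trace := by
  simp only [frobSq, Matrix.trace, Matrix.diag_apply, Matrix.mul_apply,
    Matrix.conjTranspose_apply, Complex.ofReal_sum, Complex.normSq_eq_conj_mul_self]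
  exact Finset.sum_comm

lemma frobSq_mul_mul_conjTranspose [DecidableEq m] [DecidableEq n] {U : Matrix m' m ℂ}
    {V : Matrix n' n ℂ} (M : Matrix m n ℂ) (hU : Uᴴ * U = 1) (hV : Vᴴ * V = 1) :
    frobSq (U * M * Vᴴ) = frobSq M := by
  apply Complex.ofReal_injective
  rw [ofReal_frobSq, ofReal_frobSq, Matrix.conjTranspose_mul, Matrix.conjTranspose_mul,
    Matrix.conjTranspose_conjTranspose]
  have hUM : V * (Mᴴ * Uᴴ) * (U * M * Vᴴ) = V * (Mᴴ * M) * Vᴴ := by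
    simp only [Matrix.mul_assoc]
    rw [← Matrix.mul_assoc Uᴴ, hU, Matrix.one_mul]
  rw [hUM, Matrix.trace_mul_comm, ← Matrix.mul_assoc, hV, Matrix.one_mul]

lemma frobSq_of_unique [Unique m] [Unique n] (M : Matrix m n ℂ) :
    frobSq M = Complex.normSq (M default default) := by
  simp [frobSq]

lemma frobSq_le_of_offDiag_eq_zero {a b : ℕ} {M : Matrix (Fin a) (Fin b) ℂ} {c : ℝ}
    (hc : 0 ≤ c) (hoff : ∀ (i : Fin a) (j : Fin b), (i : ℕ) ≠ j → M i j = 0)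
    (hdiag : ∀ (i : Fin a) (j : Fin b), (i : ℕ) = j → Complex.normSq (M i j) ≤ c) :
    frobSq M ≤ min (a : ℝ) b * c := by
  set D := Finset.univ.filter fun p : Fin a × Fin b => (p.1 : ℕ) = p.2
  have hD : D.card ≤ min a b := by
    refine le_min ?_ ?_
    · simpa using Finset.card_le_card_of_injOn Prod.fst (s := D) (t := Finset.univ)
        (fun _ _ => Finset.mem_univ _) fun p hp q hq h => Prod.ext h (Fin.ext (by simp_all [D]))
    · simpa using Finset.card_le_card_of_injOn Prod.snd (s := D) (t := Finset.univ)
        (fun _ _ => Finset.mem_univ _) fun p hp q hq h => Prod.ext (Fin.ext (by simp_all [D])) h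
  calc frobSq M = ∑ p : Fin a × Fin b, Complex.normSq (M p.1 p.2) :=
        (Fintype.sum_prod_type' _).symm
    _ ≤ ∑ p : Fin a × Fin b, if (p.1 : ℕ) = p.2 then c else 0 := by
        refine Finset.sum_le_sum fun p _ => ?_
        split_ifs with h
        · exact hdiag _ _ h
        · simp [hoff _ _ h]
    _ = D.card * c := by
        rw [Finset.sum_ite, Finset.sum_const_zero, add_zero, Finset.sum_const, nsmul_eq_mul]
    _ ≤ min (a : ℝ) b * c := by
        gcongr
        exact_mod_cast hD

end Frobenius

section Fourier

variable {n1 n2 n3 l : ℕ}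

lemma hatSlice_apply_eq_mulVec (A : T3 n1 n2 n3 ℝ) (k : Fin n3) (i : Fin n1) (j : Fin n2) :
    hatSlice A k i j = (dftMatrix n3 *ᵥ fun m => (A i j m : ℂ)) k := rfl

lemma tNorm_sq (A : T3 n1 n2 n3 ℝ) : tNorm A ^ 2 = tInner A A :=
  Real.sq_sqrt (Finset.sum_nonneg fun _ _ => Finset.sum_nonneg fun _ _ =>
    Finset.sum_nonneg fun _ _ => mul_self_nonneg _)

lemma sum_frobSq_hatSlice (A : T3 n1 n2 n3 ℝ) :
    ∑ k, frobSq (hatSlice A k) = n3 * tNorm A ^ 2 := by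
  simp only [frobSq, tNorm_sq, tInner, hatSlice_apply_eq_mulVec, Finset.mul_sum]
  rw [Finset.sum_comm]
  refine Finset.sum_congr rfl fun i _ => ?_
  rw [Finset.sum_comm]
  refine Finset.sum_congr rfl fun j _ => ?_
  rw [sum_normSq_dftMatrix_mulVec, Finset.mul_sum]
  simp

lemma hatSlice_tprod (A : T3 n1 n2 n3 ℝ) (B : T3 n2 l n3 ℝ) (k : Fin n3) :
    hatSlice (tprod A B) k = hatSlice A k * hatSlice B k := by
  ext i j
  calc hatSlice (tprod A B) k i j
      = ∑ q, ∑ p, (∑ m, dftMatrix n3 k m * (A i p (m - q) : ℂ)) * (B p j q : ℂ) := by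
        simp only [hatSlice, tprod, Complex.ofReal_sum, Complex.ofReal_mul, Finset.mul_sum,
          Finset.sum_mul, mul_assoc]
        rw [Finset.sum_comm]
        exact Finset.sum_congr rfl fun q _ => Finset.sum_comm
    _ = ∑ q, ∑ p, hatSlice A k i p * (dftMatrix n3 k q * (B p j q : ℂ)) := by
        refine Finset.sum_congr rfl fun q _ => Finset.sum_congr rfl fun p _ => ?_
        rw [sum_dftMatrix_mul_sub k q fun r => (A i p r : ℂ), hatSlice]
        ring
    _ = (hatSlice A k * hatSlice B k) i j := by
        rw [Finset.sum_comm]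
        simp only [Matrix.mul_apply, hatSlice, Finset.mul_sum]

lemma hatSlice_tT (A : T3 n1 n2 n3 ℝ) (k : Fin n3) : hatSlice (tT A) k = (hatSlice A k)ᴴ := by
  have := NeZero.of_pos k.pos
  ext j i
  simp only [hatSlice, tT, Matrix.conjTranspose_apply, star_sum, star_mul', Complex.star_def,
    Complex.conj_ofReal, ← dftMatrix_neg_right]
  exact Fintype.sum_equiv (Equiv.neg _) _ _ fun m => by rw [Equiv.neg_apply, neg_neg]

lemma hatSlice_tI (q : ℕ) (k : Fin n3) : hatSlice (tI q n3) k = 1 := by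
  have := NeZero.of_pos k.pos
  ext i j
  rw [hatSlice, Finset.sum_eq_single 0]
  · simp [tI, dftMatrix_zero_right, Matrix.one_apply, apply_ite]
  · intro m _ hm
    simp [tI, Fin.val_ne_zero_iff.mpr hm]
  · simp

lemma PartOrth.conjTranspose_hatSlice_mul_self {n q : ℕ} {Q : T3 n q n3 ℝ} (hQ : PartOrth Q)
    (k : Fin n3) : (hatSlice Q k)ᴴ * hatSlice Q k = 1 := by
  rw [← hatSlice_tT, ← hatSlice_tprod, hQ, hatSlice_tI]

lemma IsTSVD.frobSq_hatSlice {A : T3 n1 n2 n3 ℝ} {U : T3 n1 n1 n3 ℝ} {S : T3 n1 n2 n3 ℝ}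
    {V : T3 n2 n2 n3 ℝ} (h : IsTSVD A U S V) (k : Fin n3) :
    frobSq (hatSlice A k) = frobSq (hatSlice S k) := by
  obtain ⟨hU, hV, -, rfl⟩ := h
  rw [hatSlice_tprod, hatSlice_tprod, hatSlice_tT]
  exact frobSq_mul_mul_conjTranspose _ (PartOrth.conjTranspose_hatSlice_mul_self hU.1 k)
    (PartOrth.conjTranspose_hatSlice_mul_self hV.1 k)

lemma frobSq_hatSlice_tube (S : T3 n1 n2 n3 ℝ) (i : Fin n1) (j : Fin n2) (k : Fin n3) :
    frobSq (hatSlice (tube S i j) k) = Complex.normSq (hatSlice S k i j) :=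
  frobSq_of_unique _

lemma FDiag.hatSlice_eq_zero {S : T3 n1 n2 n3 ℝ} (hS : FDiag S) (k : Fin n3) {i : Fin n1}
    {j : Fin n2} (hij : (i : ℕ) ≠ j) : hatSlice S k i j = 0 :=
  Finset.sum_eq_zero fun m _ => by rw [hS i j m hij, Complex.ofReal_zero, mul_zero]

lemma OrderedDiag.normSq_hatSlice_le {S : T3 n1 n2 n3 ℝ} (hS : OrderedDiag S) (hn1 : 0 < n1)
    (hn2 : 0 < n2) (k : Fin n3) {i : Fin n1} {j : Fin n2} (hij : (i : ℕ) = j) :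
    Complex.normSq (hatSlice S k i j) ≤ Complex.normSq (hatSlice S k ⟨0, hn1⟩ ⟨0, hn2⟩) := by
  obtain ⟨him, hre⟩ := (hS k).1 i j hij
  obtain ⟨him₀, hre₀⟩ := (hS k).1 ⟨0, hn1⟩ ⟨0, hn2⟩ rfl
  have hle := (hS k).2 ⟨0, hn1⟩ i ⟨0, hn2⟩ j rfl hij (Nat.zero_le _)
  rw [Complex.normSq_apply, Complex.normSq_apply, him, him₀, mul_zero, add_zero, add_zero]
  exact mul_self_le_mul_self hre hle

lemma frobSq_hatSlice_le_of_orderedDiag {S : T3 n1 n2 n3 ℝ} (hd : FDiag S) (ho : OrderedDiag S)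
    (hn1 : 0 < n1) (hn2 : 0 < n2) (k : Fin n3) :
    frobSq (hatSlice S k) ≤ min (n1 : ℝ) n2 * Complex.normSq (hatSlice S k ⟨0, hn1⟩ ⟨0, hn2⟩) :=
  frobSq_le_of_offDiag_eq_zero (Complex.normSq_nonneg _) (fun _ _ => hd.hatSlice_eq_zero k)
    fun _ _ => ho.normSq_hatSlice_le hn1 hn2 k

end Fourier

end T3

/-- for an ordered t-SVD `A = U * S * Vᵀ`, the leading singular tube
dominates: `‖S(1,1,:)‖_F² ≥ ‖A‖_F² / min(n1,n2)`. -/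
theorem stmt_8 (n1 n2 n3 : ℕ) (hn1 : 0 < n1) (hn2 : 0 < n2)
    (A : T3 n1 n2 n3 ℝ) (U : T3 n1 n1 n3 ℝ) (S : T3 n1 n2 n3 ℝ)
    (V : T3 n2 n2 n3 ℝ) (h : IsOrderedTSVD A U S V) :
    tNorm (tube S ⟨0, hn1⟩ ⟨0, hn2⟩) ^ 2 ≥ tNorm A ^ 2 / (min n1 n2 : ℝ) := by
  obtain ⟨hsvd, ho⟩ := h
  rcases Nat.eq_zero_or_pos n3 with rfl | hn3
  · simp [tNorm, tInner]
  set t := tube S ⟨0, hn1⟩ ⟨0, hn2⟩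
  have hsum : (n3 : ℝ) * tNorm A ^ 2 ≤ n3 * (min (n1 : ℝ) n2 * tNorm t ^ 2) :=
    calc (n3 : ℝ) * tNorm A ^ 2 = ∑ k, frobSq (hatSlice S k) := by
          rw [← sum_frobSq_hatSlice]
          exact Finset.sum_congr rfl fun k _ => hsvd.frobSq_hatSlice k
      _ ≤ ∑ k, min (n1 : ℝ) n2 * frobSq (hatSlice t k) := by
          refine Finset.sum_le_sum fun k _ => ?_
          rw [frobSq_hatSlice_tube]
          exact frobSq_hatSlice_le_of_orderedDiag hsvd.2.2.1 ho hn1 hn2 k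
      _ = n3 * (min (n1 : ℝ) n2 * tNorm t ^ 2) := by
          rw [← Finset.mul_sum, sum_frobSq_hatSlice, mul_left_comm]
  have hmin : (0 : ℝ) < min (n1 : ℝ) n2 := lt_min (Nat.cast_pos.mpr hn1) (Nat.cast_pos.mpr hn2)
  rw [ge_iff_le, div_le_iff₀ hmin, mul_comm]
  exact le_of_mul_le_mul_left hsum (Nat.cast_pos.mpr hn3)
end
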